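/- For every real k > 1 and every real g ∈ (0, 1/4), the series ∑_{m=0}^∞ k^m·W_m(g) is summable if and only if g < k/(k+1)². In other words, the critical coupling of the height-coupled tree partition function equals g_c(k) = k/(k+1)² for k > 1. -/

import Mathlib

/-! Write `g = q/(q+1)²` with `0 ≤ q < 1`. The Möbius map `x ↦ 1/(1 - g x)` then has the fixed
points `q+1` and `(q+1)/q`, and conjugating it to `y ↦ q y` gives the closed form
`X_m = (q+1)(1 - q^(m+1))/(1 - q^(m+2))`. Hence `W_m ~ (q+1)(1-q)² q^m`, so `∑ k^m W_m` converges
iff `kq < 1`; since `t ↦ t/(t+1)²` is increasing on `[0, 1]`, this means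
`g < (1/k)/(1/k+1)² = k/(k+1)²`. -/

/-- The sequence `X_m(g)` defined by `X_0 = 1`, `X_{m+1} = 1/(1 - g X_m)`. -/
noncomputable def Xseq (g : ℝ) : ℕ → ℝ
  | 0 => 1
  | m + 1 => 1 / (1 - g * Xseq g m)

/-- The fixed-height partition functions `W_0(g) = 1`, `W_m(g) = X_m(g) - X_{m-1}(g)` for `m ≥ 1`. -/
noncomputable def Wseq (g : ℝ) : ℕ → ℝ
  | 0 => 1
  | m + 1 => Xseq g (m + 1) - Xseq g m

open Filter Topology Asymptotics

theorem one_sub_pow_ne_zero_of_abs_lt_one {q : ℝ} (hq : |q| < 1) {n : ℕ} (hn : n ≠ 0) :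
    1 - q ^ n ≠ 0 := by
  have h : |q ^ n| < 1 := by rw [abs_pow]; exact pow_lt_one₀ (abs_nonneg q) hq hn
  refine sub_ne_zero.mpr fun h1 ↦ ?_
  rw [← h1, abs_one] at h
  exact h.false

theorem Xseq_div_add_one_sq {q : ℝ} (hq : |q| < 1) (m : ℕ) :
    Xseq (q / (q + 1) ^ 2) m = (q + 1) * (1 - q ^ (m + 1)) / (1 - q ^ (m + 2)) := by
  have hq1 : q + 1 ≠ 0 := by linarith [neg_abs_le q]
  induction m with
  | zero =>
    rw [Xseq, eq_div_iff (one_sub_pow_ne_zero_of_abs_lt_one hq two_ne_zero)]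
    ring
  | succ m ih =>
    have h2 := one_sub_pow_ne_zero_of_abs_lt_one hq (n := m + 2) (by omega)
    have h3 := one_sub_pow_ne_zero_of_abs_lt_one hq (n := m + 3) (by omega)
    have key : 1 - q / (q + 1) ^ 2 * Xseq (q / (q + 1) ^ 2) m =
        (1 - q ^ (m + 3)) / ((q + 1) * (1 - q ^ (m + 2))) := by
      rw [ih]
      field_simp
      ring
    rw [Xseq, key, one_div_div]

theorem Wseq_div_add_one_sq {q : ℝ} (hq : |q| < 1) (m : ℕ) :
    Wseq (q / (q + 1) ^ 2) m =
      (q + 1) * (1 - q) ^ 2 * q ^ m / ((1 - q ^ (m + 1)) * (1 - q ^ (m + 2))) := by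
  have h1 := one_sub_pow_ne_zero_of_abs_lt_one hq (n := m + 1) (by omega)
  have h2 := one_sub_pow_ne_zero_of_abs_lt_one hq (n := m + 2) (by omega)
  cases m with
  | zero =>
    have hq1 : q + 1 ≠ 0 := by linarith [neg_abs_le q]
    rw [Wseq, eq_div_iff (mul_ne_zero h1 h2)]
    ring
  | succ m =>
    rw [Wseq, Xseq_div_add_one_sq hq, Xseq_div_add_one_sq hq]
    field_simp
    ring

theorem Wseq_div_add_one_sq_isEquivalent {q : ℝ} (hq : |q| < 1) :
    Wseq (q / (q + 1) ^ 2) ~[atTop] fun m ↦ (q + 1) * (1 - q) ^ 2 * q ^ m := by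
  have hlim : Tendsto (fun m : ℕ ↦ 1 / ((1 - q ^ (m + 1)) * (1 - q ^ (m + 2)))) atTop (𝓝 1) := by
    have hpow := tendsto_pow_atTop_nhds_zero_of_abs_lt_one hq
    have h1 := (hpow.comp (tendsto_add_atTop_nat 1)).const_sub 1
    have h2 := (hpow.comp (tendsto_add_atTop_nat 2)).const_sub 1
    simpa using (h1.mul h2).inv₀ (by norm_num)
  have := (IsEquivalent.refl (u := fun m : ℕ ↦ (q + 1) * (1 - q) ^ 2 * q ^ m)).mul
    ((isEquivalent_const_iff_tendsto one_ne_zero).mpr hlim)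
  convert this using 1
  · ext m
    rw [Wseq_div_add_one_sq hq]
    simp only [Pi.mul_apply]
    ring
  · ext m; simp

theorem summable_pow_mul_Wseq_div_add_one_sq_iff {q : ℝ} (hq : |q| < 1) (k : ℝ) :
    Summable (fun m ↦ k ^ m * Wseq (q / (q + 1) ^ 2) m) ↔ |k * q| < 1 := by
  have hc : (q + 1) * (1 - q) ^ 2 ≠ 0 := by
    have : q + 1 ≠ 0 := by linarith [neg_abs_le q]
    have : 1 - q ≠ 0 := by linarith [le_abs_self q]
    positivity
  have hequiv : (fun m ↦ k ^ m * Wseq (q / (q + 1) ^ 2) m) ~[atTop]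
      fun m ↦ (q + 1) * (1 - q) ^ 2 * (k * q) ^ m := by
    convert (IsEquivalent.refl (u := fun m : ℕ ↦ k ^ m)).mul
      (Wseq_div_add_one_sq_isEquivalent hq) using 1
    · rfl
    · funext m
      simp only [Pi.mul_apply]
      ring
  calc Summable (fun m ↦ k ^ m * Wseq (q / (q + 1) ^ 2) m)
      ↔ Summable (fun m ↦ (q + 1) * (1 - q) ^ 2 * (k * q) ^ m) := hequiv.summable_iff_nat
    _ ↔ Summable (fun m ↦ (k * q) ^ m) := summable_mul_left_iff hc
    _ ↔ |k * q| < 1 := summable_geometric_iff_norm_lt_one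

theorem exists_eq_div_add_one_sq {g : ℝ} (hg0 : 0 ≤ g) (hg1 : g < 1 / 4) :
    ∃ q, 0 ≤ q ∧ q < 1 ∧ g = q / (q + 1) ^ 2 := by
  set s := √(1 - 4 * g)
  have hs0 : 0 < s := Real.sqrt_pos.mpr (by linarith)
  have hs : s ^ 2 = 1 - 4 * g := Real.sq_sqrt (by linarith)
  have hs1 : s ≤ 1 := by nlinarith
  refine ⟨(1 - s) / (1 + s), by positivity, (div_lt_one (by positivity)).mpr (by linarith), ?_⟩
  field_simp
  nlinarith

theorem div_add_one_sq_lt_div_add_one_sq_iff {q k : ℝ} (hq : 0 ≤ q) (hqk : q < k) :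
    q / (q + 1) ^ 2 < k / (k + 1) ^ 2 ↔ k * q < 1 := by
  have hfactor : k * (q + 1) ^ 2 - q * (k + 1) ^ 2 = (k - q) * (1 - k * q) := by ring
  rw [div_lt_div_iff₀ (by positivity) (by nlinarith), ← sub_pos, hfactor,
    mul_pos_iff_of_pos_left (sub_pos.mpr hqk), sub_pos]

theorem stmt_9 (k : ℝ) (hk : 1 < k) (g : ℝ) (hg0 : 0 < g) (hg1 : g < 1/4) :
    Summable (fun m : ℕ => k ^ m * Wseq g m) ↔ g < k / (k + 1) ^ 2 := by
  obtain ⟨q, hq0, hq1, rfl⟩ := exists_eq_div_add_one_sq hg0.le hg1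
  rw [summable_pow_mul_Wseq_div_add_one_sq_iff (abs_lt.mpr ⟨by linarith, hq1⟩),
    abs_of_nonneg (by positivity), div_add_one_sq_lt_div_add_one_sq_iff hq0 (by linarith)]
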